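/- The lattice N(A_1^{24}) — generated by ℤ²⁴ together with the vectors y^c = (1/2)c for c in the Golay code, with bilinear form twice the standard inner product on ℝ²⁴ — is an even unimodular lattice of rank 24. -/

import Mathlib

/-- The generator matrix `[I₁₂ | A]` of the binary Golay code. -/
def golayGenMatrix : Matrix (Fin 12) (Fin 24) (ZMod 2) :=
  !![1, 0, 0, 0, 0, 0, 0, 0, 0, 0, 0, 0, 0, 0, 1, 1, 0, 0, 1, 1, 1, 1, 0, 1;
    0, 1, 0, 0, 0, 0, 0, 0, 0, 0, 0, 0, 1, 0, 0, 1, 1, 0, 0, 1, 1, 1, 1, 0;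
    0, 0, 1, 0, 0, 0, 0, 0, 0, 0, 0, 0, 1, 1, 0, 0, 1, 1, 0, 0, 0, 1, 1, 1;
    0, 0, 0, 1, 0, 0, 0, 0, 0, 0, 0, 0, 0, 1, 1, 0, 0, 1, 1, 0, 1, 0, 1, 1;
    0, 0, 0, 0, 1, 0, 0, 0, 0, 0, 0, 0, 0, 1, 1, 1, 1, 0, 0, 1, 0, 0, 1, 1;
    0, 0, 0, 0, 0, 1, 0, 0, 0, 0, 0, 0, 1, 0, 1, 1, 1, 1, 0, 0, 1, 0, 0, 1;
    0, 0, 0, 0, 0, 0, 1, 0, 0, 0, 0, 0, 1, 1, 0, 1, 0, 1, 1, 0, 1, 1, 0, 0;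
    0, 0, 0, 0, 0, 0, 0, 1, 0, 0, 0, 0, 1, 1, 1, 0, 0, 0, 1, 1, 0, 1, 1, 0;
    0, 0, 0, 0, 0, 0, 0, 0, 1, 0, 0, 0, 1, 0, 0, 1, 0, 1, 1, 1, 0, 0, 1, 1;
    0, 0, 0, 0, 0, 0, 0, 0, 0, 1, 0, 0, 1, 1, 0, 0, 1, 0, 1, 1, 1, 0, 0, 1;
    0, 0, 0, 0, 0, 0, 0, 0, 0, 0, 1, 0, 0, 1, 1, 0, 1, 1, 0, 1, 1, 1, 0, 0;
    0, 0, 0, 0, 0, 0, 0, 0, 0, 0, 0, 1, 0, 0, 1, 1, 1, 1, 1, 0, 0, 1, 1, 0]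

/-- The binary Golay code: the span of the rows of the generator matrix. -/
def golayCode : Submodule (ZMod 2) (Fin 24 → ZMod 2) :=
  Submodule.span (ZMod 2) (Set.range fun i : Fin 12 => golayGenMatrix i)

/-- The Niemeier lattice `N(A₁²⁴)`: the ℤ-span of `ℤ²⁴` together with the vectors
`yᶜ = (1/2)c` for `c` in the Golay code (codewords regarded as real 0-1 vectors). -/
def NA1 : Submodule ℤ (Fin 24 → ℝ) :=
  Submodule.span ℤ
    ({x : Fin 24 → ℝ | ∀ i, ∃ m : ℤ, x i = (m : ℝ)} ∪
      {y : Fin 24 → ℝ | ∃ c ∈ golayCode, y = fun i => ((c i).val : ℝ) / 2})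

/-! Write `x = k / 2` with `k ∈ ℤ²⁴`. Then `x` lies in `N(A₁²⁴)` exactly when `k mod 2` lies in the
Golay code `𝒢`, and for `x = k / 2`, `y = l / 2` one has `(x, y) = (k ⬝ l) / 2` and
`(x, x) / 2 = (k ⬝ k) / 4`. Since `k ⬝ l ≡ (k mod 2) ⬝ (l mod 2) (mod 2)` and
`k ⬝ k ≡ wt (k mod 2) (mod 4)`, the lattice is integral because `𝒢` is self-orthogonal, even
because `𝒢` is doubly even, and contains its dual because `𝒢⊥ ⊆ 𝒢` (test a dual vector against
`ℤ²⁴` to see that it has the form `l / 2`, then against the `yᶜ`). The Golay code is self-dual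
because its generator matrix `G` has rank 12 and `G Gᵀ = 0`. The rank is 24 because
`ℤ²⁴ ⊆ N(A₁²⁴) ⊆ ½ ℤ²⁴`. -/

open Matrix

section Codes

variable {K ι : Type*} [Field K] [Fintype ι]

def IsSelfDualCode (C : Submodule K (ι → K)) : Prop :=
  ∀ v, v ∈ C ↔ ∀ c ∈ C, c ⬝ᵥ v = 0

theorem IsSelfDualCode.dotProduct_eq_zero {C : Submodule K (ι → K)} (hC : IsSelfDualCode C)
    {c d : ι → K} (hc : c ∈ C) (hd : d ∈ C) : c ⬝ᵥ d = 0 :=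
  (hC d).1 hd c hc

theorem mem_ker_mulVecLin_iff {m : Type*} (G : Matrix m ι K) (v : ι → K) :
    v ∈ LinearMap.ker G.mulVecLin ↔ ∀ c ∈ Submodule.span K (Set.range G), c ⬝ᵥ v = 0 := by
  refine ⟨fun hv c hc => ?_, fun h => funext fun i => h _ (Submodule.subset_span ⟨i, rfl⟩)⟩
  induction hc using Submodule.span_induction with
  | mem x hx => obtain ⟨i, rfl⟩ := hx; exact congrFun hv i
  | zero => simp
  | add x y _ _ hx hy => simp [add_dotProduct, hx, hy]
  | smul a x _ hx => simp [smul_dotProduct, hx]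

theorem span_rows_eq_ker_mulVecLin {m : Type*} [Fintype m] (G : Matrix m ι K)
    (hGG : G * Gᵀ = 0) (hrank : 2 * G.rank = Fintype.card ι) :
    Submodule.span K (Set.range G) = LinearMap.ker G.mulVecLin := by
  have hle : Submodule.span K (Set.range G) ≤ LinearMap.ker G.mulVecLin := by
    rw [Submodule.span_le]
    rintro _ ⟨i, rfl⟩
    ext j
    simpa [mulVec, dotProduct, mul_apply] using congrFun (congrFun hGG j) i
  refine Submodule.eq_of_le_of_finrank_eq hle ?_
  have hker := LinearMap.finrank_range_add_finrank_ker G.mulVecLin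
  change G.rank + _ = _ at hker
  rw [Module.finrank_fintype_fun_eq_card] at hker
  have hrow : G.rank = Module.finrank K (Submodule.span K (Set.range G)) :=
    G.rank_eq_finrank_span_row
  omega

theorem isSelfDualCode_span_rows {m : Type*} [Fintype m] (G : Matrix m ι K)
    (hGG : G * Gᵀ = 0) (hrank : 2 * G.rank = Fintype.card ι) :
    IsSelfDualCode (Submodule.span K (Set.range G)) := fun v => by
  rw [← mem_ker_mulVecLin_iff, ← span_rows_eq_ker_mulVecLin G hGG hrank]

end Codes

section BinaryCodes

variable {ι : Type*} [Fintype ι]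

def IsDoublyEvenCode (C : Submodule (ZMod 2) (ι → ZMod 2)) : Prop :=
  ∀ c ∈ C, (4 : ℤ) ∣ ∑ i, ((c i).val : ℤ)

theorem two_dvd_sum_val_mul_val {c d : ι → ZMod 2} (h : c ⬝ᵥ d = 0) :
    (2 : ℤ) ∣ ∑ i, ((c i).val : ℤ) * (d i).val :=
  (ZMod.intCast_zmod_eq_zero_iff_dvd _ 2).mp (by simpa [dotProduct] using h)

theorem sum_val_add (c d : ι → ZMod 2) :
    ∑ i, (((c + d) i).val : ℤ) =
      ∑ i, ((c i).val : ℤ) + ∑ i, ((d i).val : ℤ) - 2 * ∑ i, ((c i).val : ℤ) * (d i).val := by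
  have hval : ∀ a b : ZMod 2, ((a + b).val : ℤ) = a.val + b.val - 2 * (a.val * b.val) := by
    decide
  simp only [Pi.add_apply, hval, Finset.sum_sub_distrib, Finset.sum_add_distrib, Finset.mul_sum]

theorem isDoublyEvenCode_span {S : Set (ι → ZMod 2)}
    (hS : ∀ s ∈ S, (4 : ℤ) ∣ ∑ i, ((s i).val : ℤ))
    (horth : ∀ c ∈ Submodule.span (ZMod 2) S, ∀ d ∈ Submodule.span (ZMod 2) S, c ⬝ᵥ d = 0) :
    IsDoublyEvenCode (Submodule.span (ZMod 2) S) := by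
  intro c hc
  induction hc using Submodule.span_induction with
  | mem x hx => exact hS x hx
  | zero => simp
  | add x y hx hy ihx ihy =>
    have := two_dvd_sum_val_mul_val (horth x hx y hy)
    rw [sum_val_add]
    omega
  | smul a x _ ih =>
    obtain rfl | rfl : a = 0 ∨ a = 1 := by decide +revert
    · simp
    · rwa [one_smul]

end BinaryCodes

theorem Submodule.finrank_eq_card_of_smul_mem {ι : Type*} [Fintype ι] {n : ℤ} (hn : n ≠ 0)
    (K : Submodule ℤ (ι → ℤ)) (hK : ∀ k, n • k ∈ K) :
    Module.finrank ℤ K = Fintype.card ι := by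
  refine le_antisymm (K.finrank_le.trans_eq (Module.finrank_fintype_fun_eq_card ℤ)) ?_
  have hinj : Function.Injective (LinearMap.codRestrict K (n • LinearMap.id) hK) :=
    fun k l h => smul_right_injective _ hn (congrArg Subtype.val h)
  simpa using LinearMap.finrank_le_finrank_of_injective hinj

theorem Int.exists_cast_div_two_eq_intCast_iff (n : ℤ) :
    (∃ m : ℤ, (n : ℝ) / 2 = m) ↔ (n : ZMod 2) = 0 := by
  rw [ZMod.intCast_zmod_eq_zero_iff_dvd]
  constructor
  · rintro ⟨m, hm⟩
    exact ⟨m, by rw [mul_comm]; exact_mod_cast (div_eq_iff two_ne_zero).mp hm⟩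
  · rintro ⟨m, rfl⟩
    exact ⟨m, by push_cast; ring⟩

theorem Int.four_dvd_mul_self_sub_val (k : ℤ) : (4 : ℤ) ∣ k * k - ((k : ZMod 2).val : ℤ) := by
  have h2 : (2 : ZMod 2) = 0 := rfl
  obtain ⟨m, rfl | rfl⟩ := Int.even_or_odd' k
  · have hval : (((2 * m : ℤ) : ZMod 2).val : ℤ) = 0 := by simp [h2]
    exact ⟨m * m, by rw [hval]; ring⟩
  · have hval : (((2 * m + 1 : ℤ) : ZMod 2).val : ℤ) = 1 := by
      simp [h2, ZMod.val_one]
    exact ⟨m * m + m, by rw [hval]; ring⟩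

section ConstructionA

variable {ι : Type*}

-- `NA1` is `constructionA golayCode` by definition.
def constructionA (C : Submodule (ZMod 2) (ι → ZMod 2)) : Submodule ℤ (ι → ℝ) :=
  Submodule.span ℤ
    ({x : ι → ℝ | ∀ i, ∃ m : ℤ, x i = (m : ℝ)} ∪
      {y : ι → ℝ | ∃ c ∈ C, y = fun i => ((c i).val : ℝ) / 2})

variable (ι) in
def reduceModTwo : (ι → ℤ) →ₗ[ℤ] (ι → ZMod 2) :=
  LinearMap.compLeft (Int.castAddHom (ZMod 2)).toIntLinearMap ι

variable (ι) in
noncomputable def halve : (ι → ℤ) →ₗ[ℤ] (ι → ℝ) where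
  toFun k i := (k i : ℝ) / 2
  map_add' k l := by ext i; simp [add_div]
  map_smul' a k := by ext i; simp [mul_div_assoc]

@[simp] theorem reduceModTwo_apply (k : ι → ℤ) : reduceModTwo ι k = fun i => (k i : ZMod 2) :=
  rfl

@[simp] theorem halve_apply (k : ι → ℤ) (i : ι) : halve ι k i = (k i : ℝ) / 2 := rfl

theorem two_smul_mem_comap_reduceModTwo (C : Submodule (ZMod 2) (ι → ZMod 2)) (k : ι → ℤ) :
    (2 : ℤ) • k ∈ (C.restrictScalars ℤ).comap (reduceModTwo ι) := by
  have hred : reduceModTwo ι ((2 : ℤ) • k) = 0 := funext fun i => by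
    simp [show (2 : ZMod 2) = 0 from rfl]
  rw [Submodule.mem_comap, hred]
  exact zero_mem _

theorem halve_injective : Function.Injective (halve ι) := fun k l h =>
  funext fun i => by simpa using congrFun h i

theorem constructionA_eq_map_comap (C : Submodule (ZMod 2) (ι → ZMod 2)) :
    constructionA C = ((C.restrictScalars ℤ).comap (reduceModTwo ι)).map (halve ι) := by
  apply le_antisymm
  · rw [constructionA, Submodule.span_le]
    rintro x (hx | ⟨c, hc, rfl⟩)
    · choose m hm using hx
      exact ⟨(2 : ℤ) • m, two_smul_mem_comap_reduceModTwo C m, funext fun i => by simp [hm]⟩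
    · refine ⟨fun i => (c i).val, ?_, funext fun i => by simp⟩
      simpa using hc
  · rintro _ ⟨k, hk, rfl⟩
    set c := reduceModTwo ι k
    have hint : ∀ i, ∃ m : ℤ, (halve ι k - fun i => ((c i).val : ℝ) / 2) i = m := fun i => by
      obtain ⟨m, hm⟩ := (Int.exists_cast_div_two_eq_intCast_iff (k i - (c i).val)).mpr (by simp [c])
      exact ⟨m, by rw [← hm]; push_cast; simp [sub_div]⟩
    rw [← sub_add_cancel (halve ι k) fun i => ((c i).val : ℝ) / 2]
    exact add_mem (Submodule.subset_span (Or.inl hint))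
      (Submodule.subset_span (Or.inr ⟨c, hk, rfl⟩))

theorem mem_constructionA_iff {C : Submodule (ZMod 2) (ι → ZMod 2)} {x : ι → ℝ} :
    x ∈ constructionA C ↔ ∃ k : ι → ℤ, (fun i => (k i : ZMod 2)) ∈ C ∧ halve ι k = x := by
  rw [constructionA_eq_map_comap]
  rfl

theorem intCast_mem_constructionA {C : Submodule (ZMod 2) (ι → ZMod 2)} (k : ι → ℤ) :
    (fun i => (k i : ℝ)) ∈ constructionA C :=
  Submodule.subset_span (Or.inl fun i => ⟨k i, rfl⟩)

theorem finrank_constructionA [Fintype ι] (C : Submodule (ZMod 2) (ι → ZMod 2)) :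
    Module.finrank ℤ (constructionA C) = Fintype.card ι := by
  rw [constructionA_eq_map_comap,
    ← (Submodule.equivMapOfInjective _ halve_injective _).finrank_eq]
  exact Submodule.finrank_eq_card_of_smul_mem two_ne_zero _ (two_smul_mem_comap_reduceModTwo C)

section Fintype

variable [Fintype ι] {C : Submodule (ZMod 2) (ι → ZMod 2)}

theorem sum_halve_mul_halve (k l : ι → ℤ) :
    ∑ i, halve ι k i * halve ι l i = ((∑ i, k i * l i : ℤ) : ℝ) / 4 := by
  push_cast
  rw [Finset.sum_div]
  exact Finset.sum_congr rfl fun i _ => by simp only [halve_apply]; ring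

theorem exists_sum_mul_self_eq_intCast (hC : IsDoublyEvenCode C) {x : ι → ℝ}
    (hx : x ∈ constructionA C) : ∃ m : ℤ, ∑ i, x i * x i = m := by
  obtain ⟨k, hk, rfl⟩ := mem_constructionA_iff.mp hx
  have h4 : (4 : ℤ) ∣ ∑ i, k i * k i := by
    have := Finset.dvd_sum fun i (_ : i ∈ Finset.univ) => Int.four_dvd_mul_self_sub_val (k i)
    rw [Finset.sum_sub_distrib] at this
    simpa using (dvd_add this (hC _ hk))
  obtain ⟨m, hm⟩ := h4
  exact ⟨m, by rw [sum_halve_mul_halve, hm]; push_cast; ring⟩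

theorem exists_two_mul_sum_mul_eq_intCast (hC : IsSelfDualCode C) {x y : ι → ℝ}
    (hx : x ∈ constructionA C) (hy : y ∈ constructionA C) : ∃ m : ℤ, 2 * ∑ i, y i * x i = m := by
  obtain ⟨k, hk, rfl⟩ := mem_constructionA_iff.mp hx
  obtain ⟨l, hl, rfl⟩ := mem_constructionA_iff.mp hy
  obtain ⟨m, hm⟩ := (Int.exists_cast_div_two_eq_intCast_iff (∑ i, l i * k i)).mpr <| by
    push_cast
    exact hC.dotProduct_eq_zero hl hk
  exact ⟨m, by rw [sum_halve_mul_halve, ← hm]; ring⟩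

theorem mem_constructionA_of_forall_exists (hC : IsSelfDualCode C) {y : ι → ℝ}
    (hy : ∀ x ∈ constructionA C, ∃ m : ℤ, 2 * ∑ i, y i * x i = m) : y ∈ constructionA C := by
  classical
  have hcoord : ∀ i, ∃ l : ℤ, 2 * y i = l := fun i => by
    simpa [Pi.single_apply] using
      hy _ (intCast_mem_constructionA (C := C) (Pi.single i 1))
  choose l hl using hcoord
  have hyl : halve ι l = y := funext fun i => by rw [halve_apply, ← hl]; ring
  refine mem_constructionA_iff.mpr ⟨l, (hC _).mpr fun c hc => ?_, hyl⟩
  obtain ⟨m, hm⟩ := hy (halve ι fun i => (c i).val)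
    (mem_constructionA_iff.mpr ⟨_, by simpa using hc, rfl⟩)
  rw [← hyl, sum_halve_mul_halve] at hm
  have : ((∑ i, l i * (c i).val : ℤ) : ZMod 2) = 0 :=
    (Int.exists_cast_div_two_eq_intCast_iff _).mp ⟨m, by linarith⟩
  rw [dotProduct_comm]
  simpa [dotProduct] using this

theorem forall_exists_iff_mem_constructionA (hC : IsSelfDualCode C) (y : ι → ℝ) :
    (∀ x ∈ constructionA C, ∃ m : ℤ, 2 * ∑ i, y i * x i = m) ↔ y ∈ constructionA C :=
  ⟨mem_constructionA_of_forall_exists hC, fun hy _ hx => exists_two_mul_sum_mul_eq_intCast hC hx hy⟩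

end Fintype

end ConstructionA

theorem golayGenMatrix_mul_transpose : golayGenMatrix * golayGenMatrixᵀ = 0 := by
  decide

theorem golayGenMatrix_rank : golayGenMatrix.rank = 12 := by
  refine le_antisymm golayGenMatrix.rank_le_height ?_
  have hinv : golayGenMatrix *
      Matrix.of (fun (j : Fin 24) (i : Fin 12) => if j = Fin.castAdd 12 i then (1 : ZMod 2) else 0)
      = 1 := by
    decide
  calc 12 = (1 : Matrix (Fin 12) (Fin 12) (ZMod 2)).rank := by simp
    _ ≤ golayGenMatrix.rank := hinv ▸ rank_mul_le_left _ _

theorem golayGenMatrix_row_weight (i : Fin 12) :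
    (4 : ℤ) ∣ ∑ j, ((golayGenMatrix i j).val : ℤ) := by
  revert i
  decide

theorem golayCode_isSelfDualCode : IsSelfDualCode golayCode :=
  isSelfDualCode_span_rows golayGenMatrix golayGenMatrix_mul_transpose
    (by rw [golayGenMatrix_rank]; rfl)

theorem golayCode_isDoublyEvenCode : IsDoublyEvenCode golayCode :=
  isDoublyEvenCode_span (by rintro _ ⟨i, rfl⟩; exact golayGenMatrix_row_weight i)
    fun _ hc _ hd => golayCode_isSelfDualCode.dotProduct_eq_zero hc hd

/-- `N(A₁²⁴)`, with bilinear form twice the standard inner product on `ℝ²⁴`, is an even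
unimodular lattice of rank 24. -/
theorem stmt12 :
    -- even
    (∀ x ∈ NA1, ∃ m : ℤ, 2 * ∑ i, x i * x i = 2 * (m : ℝ)) ∧
    -- unimodular: the lattice equals its dual
    (∀ y : Fin 24 → ℝ,
      (∀ x ∈ NA1, ∃ m : ℤ, 2 * ∑ i, y i * x i = (m : ℝ)) ↔ y ∈ NA1) ∧
    -- rank 24
    Module.finrank ℤ NA1 = 24 := by
  refine ⟨fun x hx => ?_, forall_exists_iff_mem_constructionA golayCode_isSelfDualCode,
    (finrank_constructionA golayCode).trans (Fintype.card_fin 24)⟩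
  obtain ⟨m, hm⟩ := exists_sum_mul_self_eq_intCast golayCode_isDoublyEvenCode hx
  exact ⟨m, by rw [hm]⟩
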